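/- If (w_i) is a positive sequence such that there exists ε>0 and k₀ with 1/w_k² ≥ ε·∑_{i=k}^∞ 1/w_i² for all k ≥ k₀, then for all k ≥ k₀ one has ∑_{ℓ=k}^∞ 1/w_ℓ ≤ (π/√6)·√(2/ε³)·(1/w_k). In particular w_k · ∑_{ℓ=k}^∞ 1/w_ℓ is bounded uniformly in k ≥ k₀. -/

import Mathlib

/-!
Write `T m = ∑_{i ≥ m} 1 / w_{k+i}²`. The hypothesis says `T (m + 1) ≤ (1 - ε) T m`, so the tails
decay geometrically, and summation by parts turns `∑ (ℓ + 1)² / w_{k+ℓ}²` into `∑ (2m + 1) T m`,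
which is then at most `2 / ε² · T 0 ≤ 2 / ε³ · 1 / w_k²`. Cauchy–Schwarz against the weights
`1 / (ℓ + 1)` and `∑ 1 / (ℓ + 1)² = π² / 6` finish the proof.
-/

open Finset Real

noncomputable def tailSum (a : ℕ → ℝ) (m : ℕ) : ℝ := ∑' i, a (m + i)

section TailSum

variable {a : ℕ → ℝ} {ε : ℝ}

lemma summable_tail (ha : Summable a) (m : ℕ) : Summable fun i => a (m + i) := by
  simpa only [add_comm m] using (summable_nat_add_iff m).mpr ha

lemma tailSum_nonneg (ha₀ : ∀ n, 0 ≤ a n) (m : ℕ) : 0 ≤ tailSum a m :=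
  tsum_nonneg fun _ => ha₀ _

lemma tailSum_eq_add_tailSum_succ (ha : Summable a) (m : ℕ) :
    tailSum a m = a m + tailSum a (m + 1) := by
  rw [tailSum, (summable_tail ha m).tsum_eq_zero_add, add_zero, tailSum]
  simp only [add_assoc, add_comm 1]

lemma le_tailSum (ha₀ : ∀ n, 0 ≤ a n) (ha : Summable a) (m : ℕ) : a m ≤ tailSum a m := by
  rw [tailSum_eq_add_tailSum_succ ha]
  linarith [tailSum_nonneg ha₀ (m + 1)]

lemma le_one_of_mul_tailSum_le (ha₀ : ∀ n, 0 ≤ a n) (ha : Summable a) (hpos : 0 < a 0)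
    (h : ε * tailSum a 0 ≤ a 0) : ε ≤ 1 := by
  have := le_tailSum ha₀ ha 0
  nlinarith

lemma tailSum_le_geometric (ha : Summable a) (hε₁ : ε ≤ 1)
    (h : ∀ m, ε * tailSum a m ≤ a m) (m : ℕ) :
    tailSum a m ≤ (1 - ε) ^ m * tailSum a 0 := by
  induction m with
  | zero => simp
  | succ n ih =>
    have hstep : tailSum a (n + 1) ≤ (1 - ε) * tailSum a n := by
      linarith [tailSum_eq_add_tailSum_succ ha n, h n]
    calc tailSum a (n + 1) ≤ (1 - ε) * tailSum a n := hstep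
      _ ≤ (1 - ε) * ((1 - ε) ^ n * tailSum a 0) := by gcongr
      _ = (1 - ε) ^ (n + 1) * tailSum a 0 := by ring

/-- Summation by parts, with `a ℓ = T ℓ - T (ℓ + 1)` and `(ℓ + 1)² - ℓ² = 2ℓ + 1`. -/
lemma sum_range_sq_mul_eq (ha : Summable a) (n : ℕ) :
    ∑ ℓ ∈ range n, ((ℓ : ℝ) + 1) ^ 2 * a ℓ
      = ∑ m ∈ range n, (2 * (m : ℝ) + 1) * tailSum a m - (n : ℝ) ^ 2 * tailSum a n := by
  induction n with
  | zero => simp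
  | succ n ih =>
    rw [sum_range_succ, sum_range_succ, ih, tailSum_eq_add_tailSum_succ ha n]
    push_cast
    ring

lemma hasSum_two_mul_add_one_mul_geometric {x : ℝ} (hx₀ : 0 ≤ x) (hx₁ : x < 1) :
    HasSum (fun m : ℕ => (2 * (m : ℝ) + 1) * x ^ m) ((1 + x) / (1 - x) ^ 2) := by
  have hx : ‖x‖ < 1 := by rwa [Real.norm_of_nonneg hx₀]
  have hsum : (1 + x) / (1 - x) ^ 2 = 2 * (x / (1 - x) ^ 2) + (1 - x)⁻¹ := by
    have : 1 - x ≠ 0 := by linarith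
    field_simp
    ring
  rw [hsum]
  exact (((hasSum_coe_mul_geometric_of_norm_lt_one hx).mul_left 2).add
    (hasSum_geometric_of_lt_one hx₀ hx₁)).congr_fun fun m => by ring

lemma sum_range_sq_mul_le (ha₀ : ∀ n, 0 ≤ a n) (ha : Summable a) (hε : 0 < ε) (hε₁ : ε ≤ 1)
    (h : ∀ m, ε * tailSum a m ≤ a m) (n : ℕ) :
    ∑ ℓ ∈ range n, ((ℓ : ℝ) + 1) ^ 2 * a ℓ ≤ 2 / ε ^ 3 * a 0 := by
  have hT₀ := tailSum_nonneg ha₀ 0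
  have hgeom := hasSum_two_mul_add_one_mul_geometric (x := 1 - ε) (by linarith) (by linarith)
  rw [sub_sub_cancel] at hgeom
  calc ∑ ℓ ∈ range n, ((ℓ : ℝ) + 1) ^ 2 * a ℓ
      ≤ ∑ m ∈ range n, (2 * (m : ℝ) + 1) * tailSum a m := by
        rw [sum_range_sq_mul_eq ha]
        linarith [mul_nonneg (sq_nonneg (n : ℝ)) (tailSum_nonneg ha₀ n)]
    _ ≤ ∑ m ∈ range n, (2 * (m : ℝ) + 1) * ((1 - ε) ^ m * tailSum a 0) := by
        gcongr with m
        exact tailSum_le_geometric ha hε₁ h m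
    _ = (∑ m ∈ range n, (2 * (m : ℝ) + 1) * (1 - ε) ^ m) * tailSum a 0 := by
        rw [sum_mul]
        simp only [mul_assoc]
    _ ≤ (1 + (1 - ε)) / ε ^ 2 * tailSum a 0 := by
        gcongr
        exact sum_le_hasSum _
          (fun m _ => mul_nonneg (by positivity) (pow_nonneg (by linarith) m)) hgeom
    _ ≤ 2 / ε ^ 2 * (a 0 / ε) := by
        gcongr
        · linarith
        · rw [le_div_iff₀ hε, mul_comm]; exact h 0
    _ = 2 / ε ^ 3 * a 0 := by field_simp

end TailSum

lemma hasSum_one_div_succ_sq :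
    HasSum (fun ℓ : ℕ => 1 / ((ℓ : ℝ) + 1) ^ 2) (π ^ 2 / 6) := by
  simpa using (hasSum_nat_add_iff' 1).mpr hasSum_zeta_two

/-- Cauchy–Schwarz against the weights `1 / (ℓ + 1)`, whose squares sum to `π² / 6`. -/
lemma tsum_le_of_sum_range_sq_mul_sq_le {b : ℕ → ℝ} {C : ℝ} (hb : ∀ n, 0 ≤ b n)
    (h : ∀ n, ∑ ℓ ∈ range n, ((ℓ : ℝ) + 1) ^ 2 * b ℓ ^ 2 ≤ C) :
    ∑' ℓ, b ℓ ≤ π / √6 * √C := by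
  have hC : 0 ≤ C := by simpa using h 0
  have hbound : π / √6 * √C = √(C * (π ^ 2 / 6)) := by
    rw [sqrt_mul hC, sqrt_div' _ (by norm_num : (0 : ℝ) ≤ 6), sqrt_sq pi_pos.le, mul_comm]
  rw [hbound]
  refine Real.tsum_le_of_sum_range_le hb fun n => ?_
  rw [le_sqrt (sum_nonneg fun ℓ _ => hb ℓ) (by positivity)]
  have hcs := sum_mul_sq_le_sq_mul_sq (range n) (fun ℓ => ((ℓ : ℝ) + 1) * b ℓ)
    (fun ℓ => 1 / ((ℓ : ℝ) + 1))
  have hbasel : ∑ ℓ ∈ range n, (1 / ((ℓ : ℝ) + 1)) ^ 2 ≤ π ^ 2 / 6 := by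
    simpa only [one_div_pow] using sum_le_hasSum _ (fun ℓ _ => by positivity) hasSum_one_div_succ_sq
  calc (∑ ℓ ∈ range n, b ℓ) ^ 2
      = (∑ ℓ ∈ range n, ((ℓ : ℝ) + 1) * b ℓ * (1 / ((ℓ : ℝ) + 1))) ^ 2 := by
        congr 1
        exact sum_congr rfl fun ℓ _ => by field_simp
    _ ≤ (∑ ℓ ∈ range n, ((ℓ : ℝ) + 1) ^ 2 * b ℓ ^ 2) *
          ∑ ℓ ∈ range n, (1 / ((ℓ : ℝ) + 1)) ^ 2 := by
        simpa only [mul_pow] using hcs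
    _ ≤ C * (π ^ 2 / 6) := mul_le_mul (h n) hbasel (sum_nonneg fun ℓ _ => by positivity) hC

theorem stmt_1 (w : ℕ → ℝ) (hw : ∀ i, 0 < w i)
    (hsum : Summable (fun i => 1 / (w i) ^ 2))
    (ε : ℝ) (hε : 0 < ε) (k₀ : ℕ)
    (hyp : ∀ k, k₀ ≤ k → ε * ∑' i : ℕ, 1 / (w (k + i)) ^ 2 ≤ 1 / (w k) ^ 2) :
    ∀ k, k₀ ≤ k →
      ∑' ℓ : ℕ, 1 / w (k + ℓ) ≤
        (Real.pi / Real.sqrt 6) * Real.sqrt (2 / ε ^ 3) * (1 / w k) := by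
  intro k hk
  set a : ℕ → ℝ := fun ℓ => 1 / w (k + ℓ) ^ 2
  have ha₀ : ∀ ℓ, 0 ≤ a ℓ := fun ℓ => by have := hw (k + ℓ); positivity
  have ha : Summable a := summable_tail hsum k
  have htail : ∀ m, ε * tailSum a m ≤ a m := fun m => by
    simpa only [tailSum, a, add_assoc] using hyp (k + m) (by omega)
  have hε₁ : ε ≤ 1 := le_one_of_mul_tailSum_le ha₀ ha (by have := hw k; positivity) (htail 0)
  have hweighted : ∀ n, ∑ ℓ ∈ range n, ((ℓ : ℝ) + 1) ^ 2 * (1 / w (k + ℓ)) ^ 2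
      ≤ 2 / ε ^ 3 * (1 / w k) ^ 2 := by
    simpa only [one_div_pow, a, add_zero] using sum_range_sq_mul_le ha₀ ha hε hε₁ htail
  calc ∑' ℓ, 1 / w (k + ℓ) ≤ π / √6 * √(2 / ε ^ 3 * (1 / w k) ^ 2) :=
        tsum_le_of_sum_range_sq_mul_sq_le (fun ℓ => by have := hw (k + ℓ); positivity) hweighted
    _ = π / √6 * √(2 / ε ^ 3) * (1 / w k) := by
        rw [sqrt_mul (by positivity), sqrt_sq (by have := hw k; positivity), mul_assoc]
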